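/- A monoid S is right collapsible if and only if S is left reversible and S × S is indecomposable as a right S-act. -/

import Mathlib

/-- `act` is a (unital, associative) right `S`-action on `A`. -/
def IsRAct (S : Type*) [Monoid S] {A : Type*} (act : A → S → A) : Prop :=
  (∀ (a : A) (s t : S), act (act a s) t = act a (s * t)) ∧ ∀ a : A, act a 1 = a

/-- `B` is a subact: a nonempty subset closed under the action. -/
def IsSubact {S A : Type*} (act : A → S → A) (B : Set A) : Prop :=
  B.Nonempty ∧ ∀ a ∈ B, ∀ s : S, act a s ∈ B

/-- An act is indecomposable if it is not the disjoint union of two subacts. -/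
def Indecomp {S A : Type*} (act : A → S → A) : Prop :=
  ¬ ∃ B C : Set A, IsSubact act B ∧ IsSubact act C ∧ B ∩ C = ∅ ∧ B ∪ C = Set.univ

/-- `S` is left reversible: any two principal (hence any two) right ideals intersect. -/
def LeftReversible (S : Type*) [Monoid S] : Prop :=
  ∀ a b : S, ∃ u v : S, a * u = b * v

/-- A scheme of length `n ≥ 1` connecting `a` to `b`:
`a = a₁s₁, aᵢtᵢ = aᵢ₊₁sᵢ₊₁ (1 ≤ i < n), aₙtₙ = b` (1-indexed). -/
def SchemeOfLength {S A : Type*} [Monoid S] (act : A → S → A) (n : ℕ) (a b : A) : Prop :=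
  ∃ (c : ℕ → A) (s t : ℕ → S),
    a = act (c 1) (s 1) ∧
    (∀ i, 1 ≤ i → i < n → act (c i) (t i) = act (c (i + 1)) (s (i + 1))) ∧
    act (c n) (t n) = b

/-!
If `S` is right collapsible, every pair `(a, b)` is moved by some `u` onto the diagonal, which
is the orbit of `(1, 1)`; so whichever of two complementary subacts contains `(1, 1)` meets the
other one. Conversely, in a left reversible monoid the pairs collapsed by some element form a
subact, and so do the remaining pairs; indecomposability forces the former to be everything.
-/

section Indecomp

variable {S A : Type*} {act : A → S → A}

theorem Indecomp.eq_univ_of_isSubact (h : Indecomp act) {B : Set A} (hB : IsSubact act B)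
    (hBc : ∀ a ∉ B, ∀ s, act a s ∉ B) : B = Set.univ := by
  by_contra hne
  exact h ⟨B, Bᶜ, hB, ⟨Set.nonempty_compl.2 hne, hBc⟩, Set.inter_compl_self B,
    Set.union_compl_self B⟩

theorem indecomp_of_forall_exists_act_eq (x : A) (hx : ∀ a, ∃ s t, act a s = act x t) :
    Indecomp act := by
  have meet : ∀ {B C : Set A}, (∀ a ∈ B, ∀ s, act a s ∈ B) → IsSubact act C → x ∈ B →
      (B ∩ C).Nonempty := by
    rintro B C hB ⟨⟨c, hc⟩, hC⟩ hxB
    obtain ⟨s, t, hst⟩ := hx c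
    exact ⟨act c s, hst ▸ hB x hxB t, hC c hc s⟩
  rintro ⟨B, C, hB, hC, hdisj, hcover⟩
  rcases (hcover ▸ Set.mem_univ x : x ∈ B ∪ C) with hxB | hxC
  · exact (meet hB.2 hC hxB).ne_empty hdisj
  · exact (meet hC.2 hB hxC).ne_empty (Set.inter_comm C B ▸ hdisj)

end Indecomp

def collapsedPairs (S : Type*) [Monoid S] : Set (S × S) :=
  {p | ∃ u, p.1 * u = p.2 * u}

section CollapsedPairs

variable {S : Type*} [Monoid S]

theorem isSubact_collapsedPairs (hS : LeftReversible S) :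
    IsSubact (fun (p : S × S) (s : S) => (p.1 * s, p.2 * s)) (collapsedPairs S) := by
  refine ⟨⟨(1, 1), 1, rfl⟩, ?_⟩
  rintro ⟨a, b⟩ ⟨u, hu⟩ c
  obtain ⟨x, y, hxy⟩ := hS c u
  refine ⟨x, ?_⟩
  calc a * c * x = a * u * y := by rw [mul_assoc, hxy, mul_assoc]
    _ = b * u * y := by rw [hu]
    _ = b * c * x := by rw [mul_assoc, ← hxy, mul_assoc]

theorem act_notMem_collapsedPairs {p : S × S} (hp : p ∉ collapsedPairs S) (s : S) :
    (p.1 * s, p.2 * s) ∉ collapsedPairs S := by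
  rintro ⟨u, hu⟩
  exact hp ⟨s * u, by simpa only [mul_assoc] using hu⟩

end CollapsedPairs

theorem stmt17 (S : Type*) [Monoid S] :
    (∀ s t : S, ∃ u : S, s * u = t * u) ↔
      (LeftReversible S ∧
        Indecomp (fun (p : S × S) (s : S) => (p.1 * s, p.2 * s))) := by
  constructor
  · intro h
    refine ⟨fun a b => (h a b).imp fun u hu => ⟨u, hu⟩, indecomp_of_forall_exists_act_eq (1, 1) ?_⟩
    rintro ⟨a, b⟩
    obtain ⟨u, hu⟩ := h a b
    exact ⟨u, a * u, by simp [hu]⟩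
  · rintro ⟨hrev, hind⟩ s t
    have hall := hind.eq_univ_of_isSubact (isSubact_collapsedPairs hrev)
      fun _ hp => act_notMem_collapsedPairs hp
    exact (hall ▸ Set.mem_univ (s, t) : (s, t) ∈ collapsedPairs S)
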